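/- Let A be a Banach algebra and B a Banach A-bimodule. Suppose there exists a₀ ∈ A such that B** = π_ℓ***(â₀, B**) (every b″ ∈ B** can be written as π_ℓ***(â₀, y″) for some y″ ∈ B**, with â₀ the canonical image of a₀ in A**) and a₀ has the Rw*w-property with respect to B: for every net (ν_α) in B*, if the net (ν_α a₀) converges to 0 in the weak* topology of B* (where (ν a₀)(b) := ν(π_ℓ(a₀, b))), then (ν_α a₀) converges to 0 in the weak topology of B*. Then Z^ℓ_{A**}(B**) = B**, i.e., for every b″ ∈ B** the map a″ ↦ π_r***(b″, a″) is weak*–weak* continuous from A** to B**. -/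

import Mathlib

/- Common setup: Arens extensions of bounded bilinear maps between Banach spaces,
weak*–weak* continuity, and related notions. -/

open NormedSpace ContinuousLinearMap Filter Topology

section ArensDefs

variable (𝕜 : Type*) [RCLike 𝕜]
variable {X Y Z : Type*}
  [NormedAddCommGroup X] [NormedSpace 𝕜 X]
  [NormedAddCommGroup Y] [NormedSpace 𝕜 Y]
  [NormedAddCommGroup Z] [NormedSpace 𝕜 Z]

/- Helper instances: the operator-norm structures on the nested spaces of continuous linear maps
used below (Lean no longer finds them by itself: the instance search nests too deeply). -/
noncomputable instance instSeminormedAddCommGroupArensS :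
    SeminormedAddCommGroup (StrongDual 𝕜 Z →L[𝕜] X →L[𝕜] StrongDual 𝕜 Y) :=
  ContinuousLinearMap.toSeminormedAddCommGroup (E := StrongDual 𝕜 Z)
    (F := X →L[𝕜] StrongDual 𝕜 Y) (σ₁₂ := RingHom.id 𝕜)

noncomputable instance instNormedSpaceArensS :
    NormedSpace 𝕜 (StrongDual 𝕜 Z →L[𝕜] X →L[𝕜] StrongDual 𝕜 Y) :=
  ContinuousLinearMap.toNormedSpace (E := StrongDual 𝕜 Z)
    (F := X →L[𝕜] StrongDual 𝕜 Y) (σ₁₂ := RingHom.id 𝕜) (𝕜' := 𝕜)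

noncomputable instance instSeminormedAddCommGroupArensSS :
    SeminormedAddCommGroup (StrongDual 𝕜 (StrongDual 𝕜 Y) →L[𝕜] StrongDual 𝕜 Z →L[𝕜] StrongDual 𝕜 X) :=
  ContinuousLinearMap.toSeminormedAddCommGroup (E := StrongDual 𝕜 (StrongDual 𝕜 Y))
    (F := StrongDual 𝕜 Z →L[𝕜] StrongDual 𝕜 X) (σ₁₂ := RingHom.id 𝕜)

noncomputable instance instNormedSpaceArensSS :
    NormedSpace 𝕜 (StrongDual 𝕜 (StrongDual 𝕜 Y) →L[𝕜] StrongDual 𝕜 Z →L[𝕜] StrongDual 𝕜 X) :=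
  ContinuousLinearMap.toNormedSpace (E := StrongDual 𝕜 (StrongDual 𝕜 Y))
    (F := StrongDual 𝕜 Z →L[𝕜] StrongDual 𝕜 X) (σ₁₂ := RingHom.id 𝕜) (𝕜' := 𝕜)

noncomputable instance instSeminormedAddCommGroupArensExt :
    SeminormedAddCommGroup (StrongDual 𝕜 (StrongDual 𝕜 Y) →L[𝕜] StrongDual 𝕜 (StrongDual 𝕜 Z)) :=
  ContinuousLinearMap.toSeminormedAddCommGroup (E := StrongDual 𝕜 (StrongDual 𝕜 Y))
    (F := StrongDual 𝕜 (StrongDual 𝕜 Z)) (σ₁₂ := RingHom.id 𝕜)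

noncomputable instance instNormedSpaceArensExt :
    NormedSpace 𝕜 (StrongDual 𝕜 (StrongDual 𝕜 Y) →L[𝕜] StrongDual 𝕜 (StrongDual 𝕜 Z)) :=
  ContinuousLinearMap.toNormedSpace (E := StrongDual 𝕜 (StrongDual 𝕜 Y))
    (F := StrongDual 𝕜 (StrongDual 𝕜 Z)) (σ₁₂ := RingHom.id 𝕜) (𝕜' := 𝕜)

noncomputable instance instSeminormedAddCommGroupArensExt' :
    SeminormedAddCommGroup ((StrongDual 𝕜 Z →L[𝕜] StrongDual 𝕜 X) →L[𝕜] StrongDual 𝕜 Z →L[𝕜] 𝕜) :=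
  ContinuousLinearMap.toSeminormedAddCommGroup (E := StrongDual 𝕜 Z →L[𝕜] StrongDual 𝕜 X)
    (F := StrongDual 𝕜 Z →L[𝕜] 𝕜) (σ₁₂ := RingHom.id 𝕜)

noncomputable instance instNormedSpaceArensExt' :
    NormedSpace 𝕜 ((StrongDual 𝕜 Z →L[𝕜] StrongDual 𝕜 X) →L[𝕜] StrongDual 𝕜 Z →L[𝕜] 𝕜) :=
  ContinuousLinearMap.toNormedSpace (E := StrongDual 𝕜 Z →L[𝕜] StrongDual 𝕜 X)
    (F := StrongDual 𝕜 Z →L[𝕜] 𝕜) (σ₁₂ := RingHom.id 𝕜) (𝕜' := 𝕜)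

/-- The first adjoint `m*` of a bounded bilinear map `m : X × Y → Z`, characterized by
`⟨m*(z′,x), y⟩ = ⟨z′, m(x,y)⟩`. -/
noncomputable def arensS (m : X →L[𝕜] Y →L[𝕜] Z) :
    StrongDual 𝕜 Z →L[𝕜] X →L[𝕜] StrongDual 𝕜 Y :=
  ((compL 𝕜 X (Y →L[𝕜] Z) (StrongDual 𝕜 Y)).flip m).comp (compL 𝕜 Y Z 𝕜)

/-- The second adjoint `m**`, characterized by `⟨m**(y″,z′), x⟩ = ⟨y″, m*(z′,x)⟩`. -/
noncomputable def arensSS (m : X →L[𝕜] Y →L[𝕜] Z) :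
    StrongDual 𝕜 (StrongDual 𝕜 Y) →L[𝕜] StrongDual 𝕜 Z →L[𝕜] StrongDual 𝕜 X :=
  ((compL 𝕜 (StrongDual 𝕜 Z) (X →L[𝕜] StrongDual 𝕜 Y) (StrongDual 𝕜 X)).flip (arensS 𝕜 m)).comp
    (compL 𝕜 X (StrongDual 𝕜 Y) 𝕜)

/-- The Arens (triple adjoint) extension `m***` of a bounded bilinear map, characterized by
`⟨m***(x″,y″), z′⟩ = ⟨x″, m**(y″,z′)⟩`. -/
noncomputable def arensExt (m : X →L[𝕜] Y →L[𝕜] Z) :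
    StrongDual 𝕜 (StrongDual 𝕜 X) →L[𝕜] StrongDual 𝕜 (StrongDual 𝕜 Y) →L[𝕜] StrongDual 𝕜 (StrongDual 𝕜 Z) :=
  ((compL 𝕜 (StrongDual 𝕜 (StrongDual 𝕜 Y)) (StrongDual 𝕜 Z →L[𝕜] StrongDual 𝕜 X) (StrongDual 𝕜 (StrongDual 𝕜 Z))).flip
      (arensSS 𝕜 m)).comp
    (compL 𝕜 (StrongDual 𝕜 Z) (StrongDual 𝕜 X) 𝕜)

end ArensDefs

/-- A map between dual spaces is weak*–weak* continuous if it is continuous with respect to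
the weak* topologies on both sides. -/
def IsWeakStarWeakStarContinuous (𝕜 : Type*) [RCLike 𝕜] {E F : Type*}
    [NormedAddCommGroup E] [NormedSpace 𝕜 E]
    [NormedAddCommGroup F] [NormedSpace 𝕜 F]
    (T : StrongDual 𝕜 E → StrongDual 𝕜 F) : Prop :=
  Continuous fun x : WeakDual 𝕜 E =>
    (StrongDual.toWeakDual (T (WeakDual.toStrongDual x)) : WeakDual 𝕜 F)

/-!
Write `T = π_ℓ(a₀, ·)`. By the factorization every `b'' ∈ B**` has the form `y'' ∘ T*`, so it
suffices that `T**` maps `B**` into `B`: then `b''` is an evaluation `b̂₀`, and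
`a'' ↦ π_r***(b̂₀, a'')` sends `a''` to `ν ↦ a''(ν ∘ π_r(b₀, ·))`, which is weak*-continuous.

If `w = u ∘ T*` had distance `δ > 0` from `B`, Hahn–Banach and Helly's theorem would give bounded
sequences `νₙ ∈ B*`, `xₙ ∈ B` with `νₙ (T xₘ) = 0` but `‖νₘ (T xₙ)‖ > δ / 4` for all `m < n`.
Let `ν` and `η` be the weak* limits of `νₙ` and `x̂ₙ` along a free ultrafilter. Then
`T*(νₙ - ν) → 0` weak*, hence weakly by the `Rw*w`-property, so `η (T* νₘ) → η (T* ν) = 0`,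
contradicting `‖η (T* νₘ)‖ ≥ δ / 4`.
-/

section Dual

open RCLike ComplexConjugate

variable {𝕜 : Type*} [RCLike 𝕜] {E : Type*} [NormedAddCommGroup E] [NormedSpace 𝕜 E]

theorem norm_apply_le_of_forall_re_le (μ : StrongDual 𝕜 E) (S : Submodule 𝕜 E) {r : ℝ}
    (h : ∀ x ∈ S, ‖x‖ ≤ 1 → re (μ x) ≤ r) {x : E} (hx : x ∈ S) : ‖μ x‖ ≤ r * ‖x‖ := by
  have hr : 0 ≤ r := by simpa using h 0 S.zero_mem (by simp)
  rcases eq_or_ne (μ x) 0 with h0 | h0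
  · rw [h0, norm_zero]
    positivity
  have hμx : 0 < ‖μ x‖ := norm_pos_iff.mpr h0
  have hx0 : 0 < ‖x‖ := norm_pos_iff.mpr fun h => h0 (by simp [h])
  let t : 𝕜 := conj (μ x) / ((‖μ x‖ * ‖x‖ : ℝ) : 𝕜)
  have ht : ‖t • x‖ = 1 := by
    rw [norm_smul, norm_div, norm_conj, norm_ofReal, abs_of_pos (by positivity)]
    field_simp
  have hre : re (μ (t • x)) = ‖μ x‖ / ‖x‖ := by
    rw [map_smul, smul_eq_mul, div_mul_eq_mul_div, RCLike.conj_mul, ← ofReal_pow,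
      ← ofReal_div, ofReal_re]
    field_simp
  have := h _ (S.smul_mem t hx) ht.le
  rw [hre, div_le_iff₀ hx0] at this
  exact this

theorem exists_forall_tendsto_apply_of_norm_le {α : Type*} (U : Ultrafilter α)
    (g : α → StrongDual 𝕜 E) {M : ℝ} (hg : ∀ a, ‖g a‖ ≤ M) :
    ∃ G : StrongDual 𝕜 E, ∀ x, Tendsto (fun a => g a x) U (𝓝 (G x)) := by
  obtain ⟨G, -, hG⟩ := (WeakDual.isCompact_closedBall (𝕜 := 𝕜) 0 M).ultrafilter_le_nhds
    (U.map (fun a => StrongDual.toWeakDual (g a)))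
    (by
      rw [Ultrafilter.coe_map, le_principal_iff]
      exact mem_map.mpr (univ_mem' fun a => by simpa using hg a))
  rw [Ultrafilter.coe_map] at hG
  exact ⟨WeakDual.toStrongDual G, fun x => ((WeakDual.eval_continuous x).tendsto G).comp hG⟩

theorem exists_eq_inclusionInDoubleDual_of_forall_apply_eq_zero {ι : Type*} [Finite ι]
    (c : ι → E) (ξ : StrongDual 𝕜 (StrongDual 𝕜 E))
    (h : ∀ ν : StrongDual 𝕜 E, (∀ i, ν (c i) = 0) → ξ ν = 0) :
    ∃ f : E, ξ = inclusionInDoubleDual 𝕜 E f := by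
  have := Fintype.ofFinite ι
  have hker : ⨅ i, LinearMap.ker (inclusionInDoubleDual 𝕜 E (c i) : StrongDual 𝕜 E →ₗ[𝕜] 𝕜) ≤
      LinearMap.ker (ξ : StrongDual 𝕜 E →ₗ[𝕜] 𝕜) := fun ν hν => by
    simp only [Submodule.mem_iInf, LinearMap.mem_ker] at hν
    exact h ν hν
  obtain ⟨a, ha⟩ :=
    (Submodule.mem_span_range_iff_exists_fun 𝕜).mp (mem_span_of_iInf_ker_le_ker hker)
  refine ⟨∑ i, a i • c i, ContinuousLinearMap.coe_injective ?_⟩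
  simp [← ha]

theorem exists_pos_forall_le_norm_sub_inclusionInDoubleDual [CompleteSpace E]
    {w : StrongDual 𝕜 (StrongDual 𝕜 E)} (hw : ∀ f : E, w ≠ inclusionInDoubleDual 𝕜 E f) :
    ∃ δ > 0, ∀ f : E, δ ≤ ‖w - inclusionInDoubleDual 𝕜 E f‖ := by
  have hiso : Isometry (inclusionInDoubleDual 𝕜 E) := (inclusionInDoubleDualLi 𝕜).isometry
  have hclosed : IsClosed (Set.range (inclusionInDoubleDual 𝕜 E)) :=
    hiso.isClosedEmbedding.isClosed_range
  have hpos : 0 < Metric.infDist w (Set.range (inclusionInDoubleDual 𝕜 E)) :=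
    (hclosed.notMem_iff_infDist_pos (Set.range_nonempty _)).mp fun ⟨f, hf⟩ => hw f hf.symm
  refine ⟨_, hpos, fun f => ?_⟩
  exact (Metric.infDist_le_dist_of_mem (Set.mem_range_self f)).trans_eq (dist_eq_norm w _)

theorem exists_norm_le_one_forall_apply_eq_zero_lt_re {ι : Type*} [Finite ι]
    (w : StrongDual 𝕜 (StrongDual 𝕜 E)) {δ r : ℝ}
    (hd : ∀ f : E, δ ≤ ‖w - inclusionInDoubleDual 𝕜 E f‖) (hr : r < δ) (c : ι → E) :
    ∃ ν : StrongDual 𝕜 E, ‖ν‖ ≤ 1 ∧ (∀ i, ν (c i) = 0) ∧ r < re (w ν) := by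
  by_contra! H
  have hr0 : 0 ≤ r := by simpa using H 0 (by simp) (by simp)
  lift r to NNReal using hr0
  let p : Submodule 𝕜 (StrongDual 𝕜 E) :=
    ⨅ i, LinearMap.ker (inclusionInDoubleDual 𝕜 E (c i) : StrongDual 𝕜 E →ₗ[𝕜] 𝕜)
  have hp : ∀ ν, ν ∈ p ↔ ∀ i, ν (c i) = 0 := by simp [p]
  obtain ⟨g, hgw, hg⟩ := Module.Dual.exists_extension_of_le_seminorm p
    ((w : StrongDual 𝕜 E →ₗ[𝕜] 𝕜).domRestrict p) (p := r • normSeminorm 𝕜 (StrongDual 𝕜 E))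
    fun ν => by
      simpa [NNReal.smul_def] using
        norm_apply_le_of_forall_re_le w p (fun ν hν h1 => H ν h1 ((hp ν).1 hν)) ν.2
  let G : StrongDual 𝕜 (StrongDual 𝕜 E) :=
    g.mkContinuous r fun ν => by simpa [NNReal.smul_def] using hg ν
  obtain ⟨f, hf⟩ := exists_eq_inclusionInDoubleDual_of_forall_apply_eq_zero c (w - G)
    fun ν hν => by simp [G, hgw ⟨ν, (hp ν).2 hν⟩]
  have hG : ‖w - inclusionInDoubleDual 𝕜 E f‖ ≤ r := by
    rw [← hf, sub_sub_cancel w G]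
    exact LinearMap.mkContinuous_norm_le _ r.2 _
  linarith [hd f]

theorem exists_norm_le_forall_norm_apply_sub_lt {ι : Type*} [Finite ι]
    (u : StrongDual 𝕜 (StrongDual 𝕜 E)) (σ : ι → StrongDual 𝕜 E) {R ε : ℝ} (hR : ‖u‖ < R)
    (hε : 0 < ε) : ∃ x : E, ‖x‖ ≤ R ∧ ∀ i, ‖σ i x - u (σ i)‖ < ε := by
  classical
  have := Fintype.ofFinite ι
  let φ : E →L[𝕜] ι → 𝕜 := ContinuousLinearMap.pi σ
  let v : ι → 𝕜 := fun i => u (σ i)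
  suffices hv : v ∈ closure (φ '' Metric.closedBall 0 R) by
    obtain ⟨y, ⟨x, hx, rfl⟩, hxy⟩ := Metric.mem_closure_iff.mp hv ε hε
    refine ⟨x, mem_closedBall_zero_iff.mp hx, fun i => ?_⟩
    rw [← dist_eq_norm, dist_comm]
    exact (dist_pi_lt_iff hε).mp hxy i
  have hconv : Convex ℝ (φ '' Metric.closedBall 0 R) := by
    let _ : NormedSpace ℝ E := NormedSpace.restrictScalars ℝ 𝕜 E
    let _ : IsScalarTower ℝ 𝕜 E := .restrictScalars _ _ _
    exact (convex_closedBall 0 R).linear_image (φ.toLinearMap.restrictScalars ℝ)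
  by_contra hv
  obtain ⟨F, s, hF, hFv⟩ :=
    RCLike.geometric_hahn_banach_closed_point (𝕜 := 𝕜) hconv.closure isClosed_closure hv
  let μ : StrongDual 𝕜 E := F.comp φ
  have hμ : u μ = F v := by
    have hF' : ∀ y, F y = ∑ i, y i * F (fun j => if i = j then 1 else 0) := fun y => by
      simpa using LinearMap.pi_apply_eq_sum_univ (F : (ι → 𝕜) →ₗ[𝕜] 𝕜) y
    have hμσ : μ = ∑ i, F (fun j => if i = j then 1 else 0) • σ i := by
      ext x
      simpa [μ, φ, mul_comm] using hF' (fun i => σ i x)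
    rw [hμσ, hF' v]
    simp [v, mul_comm]
  have hRpos : 0 < R := (norm_nonneg u).trans_lt hR
  have hball : ∀ x : E, ‖x‖ ≤ 1 → re (μ x) ≤ s / R := fun x hx => by
    have hRx : (R : 𝕜) • x ∈ Metric.closedBall 0 R := by
      rw [mem_closedBall_zero_iff, norm_smul, norm_ofReal, abs_of_pos hRpos]
      exact mul_le_of_le_one_right hRpos.le hx
    have := hF _ (subset_closure ⟨_, hRx, rfl⟩)
    rw [le_div_iff₀ hRpos]
    simpa [μ, RCLike.smul_re, mul_comm] using this.le
  have hμR : R * ‖μ‖ ≤ s := by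
    have hs : 0 ≤ s / R := by simpa using hball 0 (by simp)
    have := μ.opNorm_le_bound hs fun x =>
      norm_apply_le_of_forall_re_le μ ⊤ (fun x _ => hball x) Submodule.mem_top
    rwa [le_div_iff₀' hRpos] at this
  have := hμR.trans_lt hFv
  rw [← hμ] at this
  nlinarith [re_le_norm (u μ), u.le_opNorm μ, norm_nonneg μ]

variable {F : Type*} [NormedAddCommGroup F] [NormedSpace 𝕜 F]

/-- The `Rw*w`-property of `a₀` for `T = π_ℓ(a₀, ·)`, tested on sequences only. -/
def IsSeqRwStarW (T : E →L[𝕜] F) : Prop :=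
  ∀ (l : Filter ℕ) (ν : ℕ → StrongDual 𝕜 F),
    Tendsto (fun n => StrongDual.toWeakDual ((ν n).comp T)) l (𝓝 0) →
      Tendsto (fun n => toWeakSpace 𝕜 (StrongDual 𝕜 E) ((ν n).comp T)) l (𝓝 0)

theorem IsSeqRwStarW.exists_lt_norm_apply_lt {T : E →L[𝕜] F} (hT : IsSeqRwStarW T)
    {ν : ℕ → StrongDual 𝕜 F} {x : ℕ → E} {M N : ℝ} (hν : ∀ n, ‖ν n‖ ≤ M) (hx : ∀ n, ‖x n‖ ≤ N)
    (hνx : ∀ m n, m < n → ν n (T (x m)) = 0) {ε : ℝ} (hε : 0 < ε) :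
    ∃ m n, m < n ∧ ‖ν m (T (x n))‖ < ε := by
  by_contra! H
  let U : Ultrafilter ℕ := Ultrafilter.of atTop
  have hU : (U : Filter ℕ) ≤ atTop := Ultrafilter.of_le atTop
  obtain ⟨ν', hν'⟩ := exists_forall_tendsto_apply_of_norm_le U ν hν
  obtain ⟨η, hη⟩ := exists_forall_tendsto_apply_of_norm_le U
    (fun n => inclusionInDoubleDual 𝕜 E (x n)) fun n => (double_dual_bound 𝕜 E (x n)).trans (hx n)
  have hν'x : ∀ m, ν' (T (x m)) = 0 := fun m =>
    tendsto_nhds_unique (hν' (T (x m))) <| tendsto_const_nhds.congr' <|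
      ((eventually_gt_atTop m).filter_mono hU).mono fun n hn => (hνx m n hn).symm
  have hη' : η (ν'.comp T) = 0 :=
    tendsto_nhds_unique (hη (ν'.comp T)) (by simp [hν'x])
  have hηε : ∀ m, ε ≤ ‖η ((ν m).comp T)‖ := fun m =>
    ge_of_tendsto (hη _).norm <| ((eventually_gt_atTop m).filter_mono hU).mono fun n hn => H m n hn
  have hweak := hT U (fun n => ν n - ν') <| tendsto_iff_forall_eval_tendsto_topDualPairing.mpr
    fun y => by
      have := (hν' (T y)).sub_const (ν' (T y))
      rw [sub_self] at this
      exact this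
  have hηlim : Tendsto (fun n => η ((ν n).comp T)) U (𝓝 0) := by
    have h : Tendsto (fun n => η ((ν n - ν').comp T)) U (𝓝 (η 0)) :=
      ((WeakBilin.eval_continuous (topDualPairing 𝕜 (StrongDual 𝕜 E)).flip η).tendsto 0).comp hweak
    simpa [sub_comp, hη'] using h
  obtain ⟨n, hn⟩ := (hηlim.norm.eventually (gt_mem_nhds (by simpa using hε))).exists
  exact (hηε n).not_gt (by simpa using hn)

theorem IsSeqRwStarW.exists_apply_comp_eq_apply [CompleteSpace F] {T : E →L[𝕜] F}
    (hT : IsSeqRwStarW T)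
    (u : StrongDual 𝕜 (StrongDual 𝕜 E)) :
    ∃ f : F, ∀ ν : StrongDual 𝕜 F, u (ν.comp T) = ν f := by
  let w : StrongDual 𝕜 (StrongDual 𝕜 F) := u.comp ((compL 𝕜 E F 𝕜).flip T)
  by_contra! hu
  obtain ⟨δ, hδ, hd⟩ := exists_pos_forall_le_norm_sub_inclusionInDoubleDual (w := w)
    fun f hf => by
      obtain ⟨ν, hν⟩ := hu f
      exact hν (DFunLike.congr_fun hf ν)
  obtain ⟨p, hp, hpp⟩ := exists_seq_of_forall_finset_exists
    (fun q : StrongDual 𝕜 F × E => ‖q.1‖ ≤ 1 ∧ δ / 2 < re (w q.1) ∧ ‖q.2‖ ≤ ‖u‖ + 1)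
    (fun q q' => q'.1 (T q.2) = 0 ∧ ‖q.1 (T q'.2) - w q.1‖ < δ / 4)
    fun s _ => by
      obtain ⟨ν, hν, hνs, hwν⟩ := exists_norm_le_one_forall_apply_eq_zero_lt_re w hd
        (half_lt_self hδ) fun q : s => T q.1.2
      obtain ⟨x, hx, hxs⟩ := exists_norm_le_forall_norm_apply_sub_lt u
        (fun q : s => q.1.1.comp T) (lt_add_one _) (by positivity : 0 < δ / 4)
      exact ⟨(ν, x), ⟨hν, hwν, hx⟩, fun q hq => ⟨hνs ⟨q, hq⟩, hxs ⟨q, hq⟩⟩⟩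
  obtain ⟨m, n, hmn, hlt⟩ := hT.exists_lt_norm_apply_lt
    (fun n => (hp n).1) (fun n => (hp n).2.2) (fun m n h => (hpp m n h).1)
    (by positivity : 0 < δ / 4)
  have hclose := (hpp m n hmn).2
  have hfar := (hp m).2.1
  linarith [re_le_norm (w (p m).1), norm_sub_norm_le (w (p m).1) ((p m).1 (T (p n).2)),
    norm_sub_rev (w (p m).1) ((p m).1 (T (p n).2))]

end Dual

section Arens

variable {𝕜 : Type*} [RCLike 𝕜] {X Y Z : Type*}
  [NormedAddCommGroup X] [NormedSpace 𝕜 X]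
  [NormedAddCommGroup Y] [NormedSpace 𝕜 Y]
  [NormedAddCommGroup Z] [NormedSpace 𝕜 Z]

theorem arensExt_inclusionInDoubleDual_apply (m : X →L[𝕜] Y →L[𝕜] Z) (x : X)
    (y'' : StrongDual 𝕜 (StrongDual 𝕜 Y)) (z' : StrongDual 𝕜 Z) :
    arensExt 𝕜 m (inclusionInDoubleDual 𝕜 X x) y'' z' = y'' (z'.comp (m x)) :=
  rfl

theorem isWeakStarWeakStarContinuous_arensExt_inclusionInDoubleDual (m : X →L[𝕜] Y →L[𝕜] Z)
    (x : X) :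
    IsWeakStarWeakStarContinuous 𝕜 fun y'' => arensExt 𝕜 m (inclusionInDoubleDual 𝕜 X x) y'' :=
  WeakDual.continuous_of_continuous_eval fun z' => WeakDual.eval_continuous (z'.comp (m x))

end Arens

theorem leftTopologicalCenter_module_eq_top_of_factorization_of_RwStarW_general
    {𝕜 : Type*} [RCLike 𝕜]
    {A : Type*} [NonUnitalNormedRing A] [NormedSpace 𝕜 A]
    {B : Type*} [NormedAddCommGroup B] [NormedSpace 𝕜 B] [CompleteSpace B]
    (πℓ : A →L[𝕜] B →L[𝕜] B) (πr : B →L[𝕜] A →L[𝕜] B)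
    (a₀ : A)
    (hfac : ∀ b'' : StrongDual 𝕜 (StrongDual 𝕜 B), ∃ y'' : StrongDual 𝕜 (StrongDual 𝕜 B),
      arensExt 𝕜 πℓ (inclusionInDoubleDual 𝕜 A a₀) y'' = b'')
    (hRww : ∀ {ι : Type*} (l : Filter ι) (ν : ι → StrongDual 𝕜 B),
      Tendsto
          (fun i => (StrongDual.toWeakDual ((ν i).comp (πℓ a₀)) : WeakDual 𝕜 B)) l (𝓝 0) →
        Tendsto
          (fun i => (toWeakSpace 𝕜 (StrongDual 𝕜 B) ((ν i).comp (πℓ a₀)) :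
            WeakSpace 𝕜 (StrongDual 𝕜 B))) l (𝓝 0)) :
    ∀ b'' : StrongDual 𝕜 (StrongDual 𝕜 B),
      IsWeakStarWeakStarContinuous 𝕜
        (fun a'' : StrongDual 𝕜 (StrongDual 𝕜 A) => arensExt 𝕜 πr b'' a'') := by
  -- `hRww` only applies to index types in its own universe, such as `ULift ℕ`
  have hseq : IsSeqRwStarW (πℓ a₀) := fun l ν h => by
    have := hRww (l.map ULift.up) (fun i => ν i.down) (by rwa [tendsto_map'_iff])
    rwa [tendsto_map'_iff] at this
  intro b''
  obtain ⟨y'', rfl⟩ := hfac b''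
  obtain ⟨b₀, hb₀⟩ := hseq.exists_apply_comp_eq_apply y''
  have hb'' : arensExt 𝕜 πℓ (inclusionInDoubleDual 𝕜 A a₀) y'' = inclusionInDoubleDual 𝕜 B b₀ :=
    ext fun ν => (arensExt_inclusionInDoubleDual_apply πℓ a₀ y'' ν).trans (hb₀ ν)
  rw [hb'']
  exact isWeakStarWeakStarContinuous_arensExt_inclusionInDoubleDual πr b₀

/-- Suppose `a₀ ∈ A` satisfies `B** = π_ℓ***(â₀, B**)` and has the
`Rw*w`-property with respect to `B`: whenever a net `(ν_α a₀)` (with `(ν a₀)(b) := ν(π_ℓ(a₀,b))`)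
tends to `0` in the weak* topology of `B*` it also tends to `0` in the weak topology of `B*`.
Then `Z^ℓ_{A**}(B**) = B**`. -/
theorem leftTopologicalCenter_module_eq_top_of_factorization_of_RwStarW
    {𝕜 : Type*} [RCLike 𝕜]
    {A : Type*} [NonUnitalNormedRing A] [NormedSpace 𝕜 A]
    [IsScalarTower 𝕜 A A] [SMulCommClass 𝕜 A A] [CompleteSpace A]
    {B : Type*} [NormedAddCommGroup B] [NormedSpace 𝕜 B] [CompleteSpace B]
    (πℓ : A →L[𝕜] B →L[𝕜] B) (πr : B →L[𝕜] A →L[𝕜] B)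
    (hℓ : ∀ (a₁ a₂ : A) (b : B), πℓ (a₁ * a₂) b = πℓ a₁ (πℓ a₂ b))
    (hr : ∀ (b : B) (a₁ a₂ : A), πr b (a₁ * a₂) = πr (πr b a₁) a₂)
    (hℓr : ∀ (a₁ : A) (b : B) (a₂ : A), πr (πℓ a₁ b) a₂ = πℓ a₁ (πr b a₂))
    (a₀ : A)
    (hfac : ∀ b'' : StrongDual 𝕜 (StrongDual 𝕜 B), ∃ y'' : StrongDual 𝕜 (StrongDual 𝕜 B),
      arensExt 𝕜 πℓ (inclusionInDoubleDual 𝕜 A a₀) y'' = b'')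
    (hRww : ∀ {ι : Type*} (l : Filter ι) (ν : ι → StrongDual 𝕜 B),
      Tendsto
          (fun i => (StrongDual.toWeakDual ((ν i).comp (πℓ a₀)) : WeakDual 𝕜 B)) l (𝓝 0) →
        Tendsto
          (fun i => (toWeakSpace 𝕜 (StrongDual 𝕜 B) ((ν i).comp (πℓ a₀)) :
            WeakSpace 𝕜 (StrongDual 𝕜 B))) l (𝓝 0)) :
    ∀ b'' : StrongDual 𝕜 (StrongDual 𝕜 B),
      IsWeakStarWeakStarContinuous 𝕜
        (fun a'' : StrongDual 𝕜 (StrongDual 𝕜 A) => arensExt 𝕜 πr b'' a'') :=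
  leftTopologicalCenter_module_eq_top_of_factorization_of_RwStarW_general πℓ πr a₀ hfac hRww
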